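/- arXiv:1204.6391 — 8 statements merged into one kernel-verified Lean document; each statement's English description precedes it below -/
import Mathlib

section
/- For every finite poset P, every subset S of its elements, and every function σ: S → ℝ that is strictly monotone with respect to P (i.e., u < v in P implies σ(u) < σ(v) for u, v ∈ S), there exists a function τ: P → ℝ that is strictly monotone with respect to P and satisfies τ(u) = σ(u) for all u ∈ S. -/
/-!
Extend one point at a time. A new point `a` only has to be placed strictly above the finitely
many values at points below `a` and strictly below those at points above `a`; by transitivity
every value of the first kind is smaller than every value of the second, so a dense linear order
without endpoints has room for it.
-/

open Set

namespace StrictMonoOn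

variable {α β : Type*} [Preorder α] [LinearOrder β] [DenselyOrdered β] [NoMinOrder β]
  [NoMaxOrder β] {f : α → β} {s : Set α}

theorem exists_extend_insert (hs : s.Finite) (hf : StrictMonoOn f s) {a : α} (ha : a ∉ s) :
    ∃ g : α → β, StrictMonoOn g (insert a s) ∧ EqOn g f s := by
  classical
  have : Nonempty β := ⟨f a⟩
  have below_lt_above : ∀ x ∈ f '' {u ∈ s | u < a}, ∀ y ∈ f '' {v ∈ s | a < v}, x < y := by
    rintro _ ⟨u, ⟨hu, hua⟩, rfl⟩ _ ⟨v, ⟨hv, hav⟩, rfl⟩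
    exact hf hu hv (hua.trans hav)
  obtain ⟨b, hlt, hgt⟩ := Set.Finite.exists_between' ((hs.sep _).image f) ((hs.sep _).image f)
    below_lt_above
  have hne : ∀ {u}, u ∈ s → u ≠ a := fun hu hua => ha (hua ▸ hu)
  refine ⟨Function.update f a b, ?_, fun u hu => Function.update_of_ne (hne hu) _ _⟩
  rintro u (rfl | hu) v (rfl | hv) huv
  · exact absurd huv (lt_irrefl _)
  · rw [Function.update_self, Function.update_of_ne (hne hv)]
    exact hgt _ ⟨v, ⟨hv, huv⟩, rfl⟩
  · rw [Function.update_self, Function.update_of_ne (hne hu)]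
    exact hlt _ ⟨u, ⟨hu, huv⟩, rfl⟩
  · rw [Function.update_of_ne (hne hu), Function.update_of_ne (hne hv)]
    exact hf hu hv huv

theorem exists_extend_union (hs : s.Finite) (hf : StrictMonoOn f s) {t : Set α}
    (ht : t.Finite) : ∃ g : α → β, StrictMonoOn g (s ∪ t) ∧ EqOn g f s := by
  induction t, ht using Set.Finite.induction_on with
  | empty => exact ⟨f, by rwa [union_empty], eqOn_refl f s⟩
  | @insert a t _ ht ih =>
    obtain ⟨g, hg, hgf⟩ := ih
    rw [union_insert]
    by_cases ha : a ∈ s ∪ t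
    · exact ⟨g, by rwa [insert_eq_of_mem ha], hgf⟩
    · obtain ⟨h, hh, hhg⟩ := hg.exists_extend_insert (hs.union ht) ha
      exact ⟨h, hh, fun u hu => (hhg (Or.inl hu)).trans (hgf hu)⟩

theorem exists_strictMono_eqOn [Finite α] (hf : StrictMonoOn f s) :
    ∃ g : α → β, StrictMono g ∧ EqOn g f s := by
  obtain ⟨g, hg, hgf⟩ := hf.exists_extend_union s.toFinite (univ : Set α).toFinite
  rw [union_univ, strictMonoOn_univ] at hg
  exact ⟨g, hg, hgf⟩

end StrictMonoOn

/-- Every P-compatible real-valued function on a subset S of a finite poset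
extends to a P-compatible function on all of P. -/
theorem stmt0 {P : Type*} [Fintype P] [PartialOrder P] (S : Set P) (σ : P → ℝ)
    (hσ : ∀ u ∈ S, ∀ v ∈ S, u < v → σ u < σ v) :
    ∃ τ : P → ℝ, (∀ u v : P, u < v → τ u < τ v) ∧ ∀ u ∈ S, τ u = σ u := by
  obtain ⟨τ, hτ, hτσ⟩ := StrictMonoOn.exists_strictMono_eqOn (s := S) hσ
  exact ⟨τ, fun _ _ huv => hτ huv, hτσ⟩
end

section
/- Let P be a finite poset with a partial representation φ: S → C([0,1],ℝ) (S ⊆ P), and for each u ∈ P let Reg(u) be the region of u as defined from φ. If two elements u and v of P are incomparable and there exists a representation of P extending φ, then Reg(u) ∩ Reg(v) ≠ ∅. -/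
open Classical

/-- The region of a vertex `u` determined by a partial representation `φ` defined on `S`. -/
noncomputable def Reg {P : Type*} [PartialOrder P] (S : Set P) (φ : P → C(unitInterval, ℝ)) (u : P) :
    Set (unitInterval × ℝ) :=
  if u ∈ S then {p | p.2 = φ u p.1}
  else {p | (∀ a ∈ S, u < a → p.2 < φ a p.1) ∧ ∀ a ∈ S, a < u → φ a p.1 < p.2}

theorem ContinuousMap.exists_eq_of_not_forall_lt {X : Type*} [TopologicalSpace X]
    [PreconnectedSpace X] (f g : C(X, ℝ)) (hfg : ¬ ∀ x, f x < g x) (hgf : ¬ ∀ x, g x < f x) :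
    ∃ x, f x = g x := by
  simp only [not_forall, not_lt] at hfg hgf
  obtain ⟨a, ha⟩ := hfg
  obtain ⟨b, hb⟩ := hgf
  exact intermediate_value_univ₂ f.continuous g.continuous hb ha

theorem mem_reg_of_extends {P : Type*} [PartialOrder P] {S : Set P}
    {φ ψ : P → C(unitInterval, ℝ)} (hψ : ∀ u v : P, u < v → ∀ x, ψ u x < ψ v x)
    (hext : ∀ a ∈ S, ψ a = φ a) (w : P) (x : unitInterval) : (x, ψ w x) ∈ Reg S φ w := by
  unfold Reg
  split_ifs with hw
  · simp [hext w hw]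
  · refine ⟨fun a ha hwa => ?_, fun a ha haw => ?_⟩
    · simpa [hext a ha] using hψ w a hwa x
    · simpa [hext a ha] using hψ a w haw x

theorem stmt2_general {P : Type*} [PartialOrder P] (S : Set P)
    (φ : P → C(unitInterval, ℝ))
    (hex : ∃ ψ : P → C(unitInterval, ℝ),
      (∀ u v : P, u < v ↔ ∀ x, ψ u x < ψ v x) ∧ ∀ a ∈ S, ψ a = φ a)
    (u v : P) (h₁ : ¬ u < v) (h₂ : ¬ v < u) :
    (Reg S φ u ∩ Reg S φ v).Nonempty := by
  obtain ⟨ψ, hψ, hext⟩ := hex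
  have hmono : ∀ a b : P, a < b → ∀ x, ψ a x < ψ b x := fun a b => (hψ a b).mp
  obtain ⟨x, hx⟩ := (ψ u).exists_eq_of_not_forall_lt (ψ v)
    (fun h => h₁ ((hψ u v).mpr h)) (fun h => h₂ ((hψ v u).mpr h))
  refine ⟨(x, ψ u x), mem_reg_of_extends hmono hext u x, ?_⟩
  rw [hx]
  exact mem_reg_of_extends hmono hext v x

/-- if two elements are incomparable and the partial representation extends
to a full representation, then their regions intersect. -/
theorem stmt2 {P : Type*} [Fintype P] [PartialOrder P] (S : Set P)
    (φ : P → C(unitInterval, ℝ))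
    (hφ : ∀ a ∈ S, ∀ b ∈ S, (a < b ↔ ∀ x, φ a x < φ b x))
    (hex : ∃ ψ : P → C(unitInterval, ℝ),
      (∀ u v : P, u < v ↔ ∀ x, ψ u x < ψ v x) ∧ ∀ a ∈ S, ψ a = φ a)
    (u v : P) (hne : u ≠ v) (h₁ : ¬ u < v) (h₂ : ¬ v < u) :
    (Reg S φ u ∩ Reg S φ v).Nonempty :=
  stmt2_general S φ hex u v h₁ h₂
end

section
/- Let P be a finite poset with a partial representation φ: S → C([0,1],ℝ), where each φ(a) is piecewise linear. If for every pair of incomparable elements u, v of P the regions Reg(u) and Reg(v) intersect, then there exists a representation ψ of P by continuous functions [0,1] → ℝ extending φ. -/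
open Classical

/-- `f` is piecewise linear on `[0,1]`: there are breakpoints `0 = t 0 ≤ … ≤ t n = 1`
such that `f` is linear on each `[t i, t (i+1)]`. -/
def IsPWL (f : C(unitInterval, ℝ)) : Prop :=
  ∃ n : ℕ, ∃ t : Fin (n + 1) → unitInterval, Monotone t ∧ t 0 = 0 ∧ t (Fin.last n) = 1 ∧
    ∀ i : Fin n, ∃ a b : ℝ, ∀ x ∈ Set.Icc (t i.castSucc) (t i.succ), f x = a * (x : ℝ) + b

/-!
Each element `u ∉ S` is drawn as `L u + s u * (U u - L u)`, where `L u` and `U u` are the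
pointwise maximum of the functions of `S` below `u` and the minimum of those above `u` (clipped
at `∓M`, so that they exist), and `s u` takes values in `(0, 1)` and is strictly increasing in
`u`; this makes `ψ` strictly monotone. For every incomparable pair with an element outside `S`
we choose a point of `Reg u ∩ Reg v`; the abscissae can be taken pairwise distinct because each
set of abscissae is open and nonempty, hence infinite. At such an abscissa the heights
prescribed to the pair are constraints on an antichain, which extend to a strictly monotone
column of heights in `(0, 1)`. Blending these columns and a default column (a strictly monotone
rank) with the weights `∏_{j ≠ k} |x - x_j|` and `∏_j |x - x_j|` keeps `s` strictly monotone and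
makes both functions of every pair pass through the chosen point.
-/

theorem exists_injOn_forall_mem {ι β : Type*} [Nonempty β] (s : Finset ι) (X : ι → Set β)
    (hX : ∀ i ∈ s, (X i).Infinite) : ∃ f : ι → β, (∀ i ∈ s, f i ∈ X i) ∧ Set.InjOn f s := by
  induction s using Finset.induction_on with
  | empty => exact ⟨fun _ => Classical.arbitrary β, by simp, by simp⟩
  | insert a s ha ih =>
    obtain ⟨f, hf, hinj⟩ := ih fun i hi => hX i (Finset.mem_insert_of_mem hi)
    obtain ⟨b, hb, hbf⟩ :=
      ((hX a (Finset.mem_insert_self a s)).sdiff (s.finite_toSet.image f)).nonempty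
    have heq : Set.EqOn f (Function.update f a b) s := fun i hi =>
      (Function.update_of_ne (ne_of_mem_of_not_mem hi ha) b f).symm
    refine ⟨Function.update f a b, fun i hi => ?_, ?_⟩
    · rcases Finset.mem_insert.1 hi with rfl | hi
      · simpa using hb
      · exact heq hi ▸ hf i hi
    · rw [Finset.coe_insert, Set.injOn_insert (by simpa using ha), Function.update_self,
        ← heq.image_eq]
      exact ⟨hinj.congr heq, hbf⟩

section Blend

variable {X κ : Type*} [MetricSpace X] (K : Finset κ) (p : κ → X)

noncomputable def baseWeight (x : X) : ℝ := ∏ j ∈ K, dist x (p j)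

noncomputable def nodeWeight (k : κ) (x : X) : ℝ := ∏ j ∈ K.erase k, dist x (p j)

noncomputable def blend (d : ℝ) (c : κ → ℝ) (x : X) : ℝ :=
  (baseWeight K p x * d + ∑ k ∈ K, nodeWeight K p k x * c k) /
    (baseWeight K p x + ∑ k ∈ K, nodeWeight K p k x)

variable {K p}

lemma baseWeight_nonneg (x : X) : 0 ≤ baseWeight K p x :=
  Finset.prod_nonneg fun _ _ => dist_nonneg

lemma nodeWeight_nonneg (k : κ) (x : X) : 0 ≤ nodeWeight K p k x :=
  Finset.prod_nonneg fun _ _ => dist_nonneg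

lemma baseWeight_apply_node {k : κ} (hk : k ∈ K) : baseWeight K p (p k) = 0 :=
  Finset.prod_eq_zero hk (dist_self _)

lemma nodeWeight_apply_node_of_ne {j k : κ} (hk : k ∈ K) (hjk : j ≠ k) :
    nodeWeight K p j (p k) = 0 :=
  Finset.prod_eq_zero (Finset.mem_erase.2 ⟨hjk.symm, hk⟩) (dist_self _)

lemma nodeWeight_apply_node_pos (hp : Set.InjOn p K) {k : κ} (hk : k ∈ K) :
    0 < nodeWeight K p k (p k) :=
  Finset.prod_pos fun _ hj => dist_pos.2 fun hkj =>
    (Finset.mem_erase.1 hj).1 (hp (Finset.mem_erase.1 hj).2 hk hkj.symm)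

lemma baseWeight_pos_or_exists_nodeWeight_pos (hp : Set.InjOn p K) (x : X) :
    0 < baseWeight K p x ∨ ∃ k ∈ K, 0 < nodeWeight K p k x := by
  by_cases h : ∃ k ∈ K, x = p k
  · obtain ⟨k, hk, rfl⟩ := h
    exact Or.inr ⟨k, hk, nodeWeight_apply_node_pos hp hk⟩
  · push Not at h
    exact Or.inl (Finset.prod_pos fun j hj => dist_pos.2 (h j hj))

lemma baseWeight_add_sum_nodeWeight_pos (hp : Set.InjOn p K) (x : X) :
    0 < baseWeight K p x + ∑ k ∈ K, nodeWeight K p k x := by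
  rcases baseWeight_pos_or_exists_nodeWeight_pos hp x with h | ⟨k, hk, h⟩
  · exact add_pos_of_pos_of_nonneg h (Finset.sum_nonneg fun k _ => nodeWeight_nonneg k x)
  · exact add_pos_of_nonneg_of_pos (baseWeight_nonneg x)
      (Finset.sum_pos' (fun k _ => nodeWeight_nonneg k x) ⟨k, hk, h⟩)

theorem continuous_blend (hp : Set.InjOn p K) (d : ℝ) (c : κ → ℝ) :
    Continuous (blend K p d c) := by
  have hw : ∀ k, Continuous (nodeWeight K p k) := fun k =>
    continuous_finsetProd _ fun _ _ => continuous_id.dist continuous_const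
  have hb : Continuous (baseWeight K p) :=
    continuous_finsetProd _ fun _ _ => continuous_id.dist continuous_const
  exact ((hb.mul continuous_const).add (continuous_finsetSum _ fun k _ =>
    (hw k).mul continuous_const)).div (hb.add (continuous_finsetSum _ fun k _ => hw k))
    fun x => (baseWeight_add_sum_nodeWeight_pos hp x).ne'

theorem blend_apply_node (hp : Set.InjOn p K) {k : κ} (hk : k ∈ K) (d : ℝ) (c : κ → ℝ) :
    blend K p d c (p k) = c k := by
  have hsum : ∀ f : κ → ℝ, ∑ j ∈ K, nodeWeight K p j (p k) * f j =
      nodeWeight K p k (p k) * f k := fun f =>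
    Finset.sum_eq_single_of_mem k hk fun j _ hjk => by
      rw [nodeWeight_apply_node_of_ne hk hjk, zero_mul]
  have hden := hsum 1
  simp only [Pi.one_apply, mul_one] at hden
  rw [blend, baseWeight_apply_node hk, hsum, hden, zero_mul, zero_add, zero_add,
    mul_div_cancel_left₀ _ (nodeWeight_apply_node_pos hp hk).ne']

theorem blend_lt_blend (hp : Set.InjOn p K) {d d' : ℝ} {c c' : κ → ℝ} (hd : d < d')
    (hc : ∀ k ∈ K, c k < c' k) (x : X) : blend K p d c x < blend K p d' c' x := by
  refine div_lt_div_of_pos_right ?_ (baseWeight_add_sum_nodeWeight_pos hp x)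
  have hle : ∀ k ∈ K, nodeWeight K p k x * c k ≤ nodeWeight K p k x * c' k := fun k hk =>
    mul_le_mul_of_nonneg_left (hc k hk).le (nodeWeight_nonneg k x)
  rcases baseWeight_pos_or_exists_nodeWeight_pos hp x with h | ⟨k, hk, h⟩
  · exact add_lt_add_of_lt_of_le (mul_lt_mul_of_pos_left hd h) (Finset.sum_le_sum hle)
  · exact add_lt_add_of_le_of_lt (mul_le_mul_of_nonneg_left hd.le (baseWeight_nonneg x))
      (Finset.sum_lt_sum hle ⟨k, hk, mul_lt_mul_of_pos_left (hc k hk) h⟩)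

theorem blend_const (hp : Set.InjOn p K) (a : ℝ) (x : X) : blend K p a (fun _ => a) x = a := by
  rw [blend, ← Finset.sum_mul, ← add_mul,
    mul_div_cancel_left₀ _ (baseWeight_add_sum_nodeWeight_pos hp x).ne']

theorem blend_mem_Ioo (hp : Set.InjOn p K) {d : ℝ} {c : κ → ℝ} (hd : d ∈ Set.Ioo 0 1)
    (hc : ∀ k ∈ K, c k ∈ Set.Ioo 0 1) (x : X) : blend K p d c x ∈ Set.Ioo 0 1 :=
  ⟨blend_const hp 0 x ▸ blend_lt_blend hp hd.1 (fun k hk => (hc k hk).1) x,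
    blend_const hp 1 x ▸ blend_lt_blend hp hd.2 (fun k hk => (hc k hk).2) x⟩

end Blend

section Affine

variable {𝕜 : Type*} [Field 𝕜] [LinearOrder 𝕜] [IsStrictOrderedRing 𝕜]

theorem add_mul_sub_mem_Ioo {l h s : 𝕜} (hlh : l < h) (hs : s ∈ Set.Ioo 0 1) :
    l + s * (h - l) ∈ Set.Ioo l h := by
  constructor <;> nlinarith [hs.1, hs.2]

theorem add_mul_sub_lt_add_mul_sub {l₁ h₁ l₂ h₂ s₁ s₂ : 𝕜} (hl : l₁ ≤ l₂) (hh : h₁ ≤ h₂)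
    (hs₁ : s₁ ∈ Set.Icc 0 1) (hs : s₁ < s₂) (hlh : l₂ < h₂) :
    l₁ + s₁ * (h₁ - l₁) < l₂ + s₂ * (h₂ - l₂) := by
  nlinarith [mul_nonneg hs₁.1 (sub_nonneg.2 hh), mul_nonneg (sub_nonneg.2 hs₁.2) (sub_nonneg.2 hl),
    mul_pos (sub_pos.2 hs) (sub_pos.2 hlh)]

theorem sub_div_sub_mem_Ioo {l h y : 𝕜} (hy : y ∈ Set.Ioo l h) :
    (y - l) / (h - l) ∈ Set.Ioo 0 1 :=
  ⟨div_pos (sub_pos.2 hy.1) (sub_pos.2 (hy.1.trans hy.2)),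
    (div_lt_one (sub_pos.2 (hy.1.trans hy.2))).2 (sub_lt_sub_right hy.2 l)⟩

end Affine

theorem exists_strictMono_mem_Ioo (P : Type*) [PartialOrder P] [Finite P] :
    ∃ τ : P → ℝ, StrictMono τ ∧ ∀ u, τ u ∈ Set.Ioo 0 1 := by
  refine ⟨fun u => 1 - 1 / ((Set.Iio u).ncard + 2), fun u v huv => ?_, fun u => ⟨?_, ?_⟩⟩
  · have : (Set.Iio u).ncard < (Set.Iio v).ncard := Set.ncard_lt_ncard (Set.Iio_ssubset_Iio huv)
    dsimp only
    gcongr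
  · rw [sub_pos, div_lt_one (by positivity)]
    linarith [(Set.Iio u).ncard.cast_nonneg (α := ℝ)]
  · simp only [sub_lt_self_iff]
    positivity
section AntichainExtension

variable {P : Type*} [PartialOrder P] (A : Finset P) (σ τ : P → ℝ)

noncomputable def maxBelow (w : P) : ℝ := (A.filter (· < w)).fold max 0 σ

noncomputable def minAbove (w : P) : ℝ := (A.filter (w < ·)).fold min 1 σ

noncomputable def extendAntichain (w : P) : ℝ :=
  if w ∈ A then σ w else maxBelow A σ w + τ w * (minAbove A σ w - maxBelow A σ w)

variable {A σ τ}

lemma le_maxBelow {a w : P} (ha : a ∈ A) (haw : a < w) : σ a ≤ maxBelow A σ w :=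
  (Finset.le_fold_max _).2 (Or.inr ⟨a, Finset.mem_filter.2 ⟨ha, haw⟩, le_rfl⟩)

lemma minAbove_le {a w : P} (ha : a ∈ A) (hwa : w < a) : minAbove A σ w ≤ σ a :=
  (Finset.fold_min_le _).2 (Or.inr ⟨a, Finset.mem_filter.2 ⟨ha, hwa⟩, le_rfl⟩)

lemma maxBelow_mono {w w' : P} (h : w ≤ w') : maxBelow A σ w ≤ maxBelow A σ w' :=
  (Finset.fold_max_le _).2 ⟨(Finset.le_fold_max _).2 (Or.inl le_rfl), fun _ ha =>
    le_maxBelow (Finset.mem_filter.1 ha).1 ((Finset.mem_filter.1 ha).2.trans_le h)⟩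

lemma minAbove_mono {w w' : P} (h : w ≤ w') : minAbove A σ w ≤ minAbove A σ w' :=
  (Finset.le_fold_min _).2 ⟨(Finset.fold_min_le _).2 (Or.inl le_rfl), fun _ ha =>
    minAbove_le (Finset.mem_filter.1 ha).1 (h.trans_lt (Finset.mem_filter.1 ha).2)⟩

lemma maxBelow_nonneg (w : P) : 0 ≤ maxBelow A σ w :=
  (Finset.le_fold_max _).2 (Or.inl le_rfl)

lemma minAbove_le_one (w : P) : minAbove A σ w ≤ 1 :=
  (Finset.fold_min_le _).2 (Or.inl le_rfl)

lemma extendAntichain_of_mem {a : P} (ha : a ∈ A) : extendAntichain A σ τ a = σ a := if_pos ha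

variable (hA : IsAntichain (· ≤ ·) (A : Set P)) (hσ : ∀ a ∈ A, σ a ∈ Set.Ioo 0 1)
include hA hσ

lemma maxBelow_lt_minAbove (w : P) : maxBelow A σ w < minAbove A σ w := by
  refine (Finset.fold_max_lt _).2
    ⟨(Finset.lt_fold_min _).2 ⟨one_pos, fun b hb => ?_⟩, fun a ha => ?_⟩
  · exact (hσ b (Finset.mem_filter.1 hb).1).1
  obtain ⟨ha, haw⟩ := Finset.mem_filter.1 ha
  refine (Finset.lt_fold_min _).2 ⟨(hσ a ha).2, fun b hb => ?_⟩
  obtain ⟨hb, hwb⟩ := Finset.mem_filter.1 hb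
  exact absurd (haw.trans hwb) (hA.not_lt ha hb)

lemma extendAntichain_mem_Ioo_of_notMem (hτ : ∀ w, τ w ∈ Set.Ioo 0 1) {w : P} (hw : w ∉ A) :
    extendAntichain A σ τ w ∈ Set.Ioo (maxBelow A σ w) (minAbove A σ w) := by
  rw [extendAntichain, if_neg hw]
  exact add_mul_sub_mem_Ioo (maxBelow_lt_minAbove hA hσ w) (hτ w)

lemma extendAntichain_mem_Ioo (hτ : ∀ w, τ w ∈ Set.Ioo 0 1) (w : P) :
    extendAntichain A σ τ w ∈ Set.Ioo 0 1 := by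
  by_cases hw : w ∈ A
  · exact extendAntichain_of_mem hw ▸ hσ w hw
  · have h := extendAntichain_mem_Ioo_of_notMem hA hσ hτ hw
    exact ⟨(maxBelow_nonneg w).trans_lt h.1, h.2.trans_le (minAbove_le_one w)⟩

lemma strictMono_extendAntichain (hτ_mono : StrictMono τ) (hτ : ∀ w, τ w ∈ Set.Ioo 0 1) :
    StrictMono (extendAntichain A σ τ) := by
  intro u v huv
  by_cases hu : u ∈ A <;> by_cases hv : v ∈ A
  · exact absurd huv (hA.not_lt hu hv)
  · rw [extendAntichain_of_mem hu]
    exact (le_maxBelow hu huv).trans_lt (extendAntichain_mem_Ioo_of_notMem hA hσ hτ hv).1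
  · rw [extendAntichain_of_mem hv]
    exact (extendAntichain_mem_Ioo_of_notMem hA hσ hτ hu).2.trans_le (minAbove_le hv huv)
  · rw [extendAntichain, extendAntichain, if_neg hu, if_neg hv]
    exact add_mul_sub_lt_add_mul_sub (maxBelow_mono huv.le) (minAbove_mono huv.le)
      (Set.Ioo_subset_Icc_self (hτ u)) (hτ_mono huv) (maxBelow_lt_minAbove hA hσ v)

end AntichainExtension

theorem exists_strictMono_interpolation {X κ P : Type*} [MetricSpace X] [PartialOrder P]
    [Finite P] (K : Finset κ) (p : κ → X) (hp : Set.InjOn p K) (A : κ → Finset P)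
    (hA : ∀ k ∈ K, IsAntichain (· ≤ ·) (A k : Set P)) (σ : κ → P → ℝ)
    (hσ : ∀ k ∈ K, ∀ a ∈ A k, σ k a ∈ Set.Ioo 0 1) :
    ∃ s : P → X → ℝ, (∀ u, Continuous (s u)) ∧ (∀ u x, s u x ∈ Set.Ioo 0 1) ∧
      (∀ u v, u < v → ∀ x, s u x < s v x) ∧ ∀ k ∈ K, ∀ a ∈ A k, s a (p k) = σ k a := by
  obtain ⟨τ, hτ_mono, hτ⟩ := exists_strictMono_mem_Ioo P
  refine ⟨fun u => blend K p (τ u) (fun k => extendAntichain (A k) (σ k) τ u),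
    fun u => continuous_blend hp _ _,
    fun u => blend_mem_Ioo hp (hτ u) fun k hk => extendAntichain_mem_Ioo (hA k hk) (hσ k hk) hτ u,
    fun u v huv => blend_lt_blend hp (hτ_mono huv) fun k hk =>
      strictMono_extendAntichain (hA k hk) (hσ k hk) hτ_mono hτ huv,
    fun k hk a ha => (blend_apply_node hp hk _ _).trans (extendAntichain_of_mem ha)⟩

theorem Continuous.finset_fold_max {ι X α : Type*} [TopologicalSpace X] [LinearOrder α]
    [TopologicalSpace α] [OrderClosedTopology α] (s : Finset ι) (b : α) {f : ι → X → α}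
    (hf : ∀ i ∈ s, Continuous (f i)) : Continuous fun x => s.fold max b (f · x) := by
  induction s using Finset.induction_on with
  | empty => exact continuous_const
  | insert a s ha ih =>
    simp only [Finset.fold_insert ha]
    exact (hf a (Finset.mem_insert_self a s)).max
      (ih fun i hi => hf i (Finset.mem_insert_of_mem hi))

theorem Continuous.finset_fold_min {ι X α : Type*} [TopologicalSpace X] [LinearOrder α]
    [TopologicalSpace α] [OrderClosedTopology α] (s : Finset ι) (b : α) {f : ι → X → α}
    (hf : ∀ i ∈ s, Continuous (f i)) : Continuous fun x => s.fold min b (f · x) := by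
  induction s using Finset.induction_on with
  | empty => exact continuous_const
  | insert a s ha ih =>
    simp only [Finset.fold_insert ha]
    exact (hf a (Finset.mem_insert_self a s)).min
      (ih fun i hi => hf i (Finset.mem_insert_of_mem hi))

theorem exists_forall_abs_lt {X P κ : Type*} [TopologicalSpace X] [CompactSpace X] [Finite P]
    (φ : P → C(X, ℝ)) (K : Finset κ) (y : κ → ℝ) :
    ∃ M, (∀ a x, |φ a x| < M) ∧ ∀ k ∈ K, |y k| < M := by
  have := Fintype.ofFinite P
  have hφ : ∀ a, ‖φ a‖ ≤ ∑ b, ‖φ b‖ := fun a =>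
    Finset.single_le_sum (fun b _ => norm_nonneg (φ b)) (Finset.mem_univ a)
  have hy : ∀ k ∈ K, |y k| ≤ ∑ j ∈ K, |y j| := fun k hk =>
    Finset.single_le_sum (fun j _ => abs_nonneg (y j)) hk
  have hφ₀ : 0 ≤ ∑ b, ‖φ b‖ := Finset.sum_nonneg fun b _ => norm_nonneg (φ b)
  have hy₀ : 0 ≤ ∑ j ∈ K, |y j| := Finset.sum_nonneg fun j _ => abs_nonneg (y j)
  refine ⟨1 + ∑ b, ‖φ b‖ + ∑ j ∈ K, |y j|, fun a x => ?_, fun k hk => ?_⟩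
  · linarith [(φ a).norm_coe_le_norm x, Real.norm_eq_abs (φ a x), hφ a]
  · linarith [hy k hk]

section Envelope

variable {X P : Type*} [TopologicalSpace X] [Fintype P] [PartialOrder P] (S : Set P)
  (φ : P → C(X, ℝ)) (M : ℝ)

noncomputable def lowerEnvelope (u : P) (x : X) : ℝ :=
  (Finset.univ.filter fun a => a ∈ S ∧ a < u).fold max (-M) (φ · x)

noncomputable def upperEnvelope (u : P) (x : X) : ℝ :=
  (Finset.univ.filter fun a => a ∈ S ∧ u < a).fold min M (φ · x)

theorem continuous_lowerEnvelope (u : P) : Continuous (lowerEnvelope S φ M u) :=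
  Continuous.finset_fold_max _ _ fun a _ => (φ a).continuous

theorem continuous_upperEnvelope (u : P) : Continuous (upperEnvelope S φ M u) :=
  Continuous.finset_fold_min _ _ fun a _ => (φ a).continuous

variable {S φ M}

lemma lowerEnvelope_lt_iff {u : P} {x : X} {c : ℝ} :
    lowerEnvelope S φ M u x < c ↔ -M < c ∧ ∀ a ∈ S, a < u → φ a x < c := by
  simp [lowerEnvelope, Finset.fold_max_lt, and_imp]

lemma lt_upperEnvelope_iff {u : P} {x : X} {c : ℝ} :
    c < upperEnvelope S φ M u x ↔ c < M ∧ ∀ a ∈ S, u < a → c < φ a x := by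
  simp [upperEnvelope, Finset.lt_fold_min, and_imp]

lemma le_lowerEnvelope {a u : P} (ha : a ∈ S) (hau : a < u) (x : X) :
    φ a x ≤ lowerEnvelope S φ M u x :=
  (Finset.le_fold_max _).2 (Or.inr ⟨a, by simp [ha, hau], le_rfl⟩)

lemma upperEnvelope_le {a u : P} (ha : a ∈ S) (hua : u < a) (x : X) :
    upperEnvelope S φ M u x ≤ φ a x :=
  (Finset.fold_min_le _).2 (Or.inr ⟨a, by simp [ha, hua], le_rfl⟩)

lemma lowerEnvelope_mono {u v : P} (huv : u ≤ v) (x : X) :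
    lowerEnvelope S φ M u x ≤ lowerEnvelope S φ M v x := by
  refine (Finset.fold_max_le _).2 ⟨(Finset.le_fold_max _).2 (Or.inl le_rfl), fun a ha => ?_⟩
  simp only [Finset.mem_filter, Finset.mem_univ, true_and] at ha
  exact le_lowerEnvelope ha.1 (ha.2.trans_le huv) x

lemma upperEnvelope_mono {u v : P} (huv : u ≤ v) (x : X) :
    upperEnvelope S φ M u x ≤ upperEnvelope S φ M v x := by
  refine (Finset.le_fold_min _).2 ⟨(Finset.fold_min_le _).2 (Or.inl le_rfl), fun a ha => ?_⟩
  simp only [Finset.mem_filter, Finset.mem_univ, true_and] at ha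
  exact upperEnvelope_le ha.1 (huv.trans_lt ha.2) x

lemma lowerEnvelope_lt_upperEnvelope (hM : ∀ a x, |φ a x| < M)
    (hφ : ∀ a ∈ S, ∀ b ∈ S, a < b → ∀ x, φ a x < φ b x) (u : P) (x : X) :
    lowerEnvelope S φ M u x < upperEnvelope S φ M u x := by
  have hM' : ∀ a, φ a x ∈ Set.Ioo (-M) M := fun a => abs_lt.1 (hM a x)
  refine lt_upperEnvelope_iff.2 ⟨lowerEnvelope_lt_iff.2 ⟨?_, fun a _ _ => (hM' a).2⟩,
    fun b hb hub => lowerEnvelope_lt_iff.2 ⟨(hM' b).1, fun a ha hau =>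
      hφ a ha b hb (hau.trans hub) x⟩⟩
  linarith [(hM' u).1, (hM' u).2]

end Envelope

section Region

variable {P : Type*} [PartialOrder P] {S : Set P} {φ : P → C(unitInterval, ℝ)}

lemma isOpen_Reg [Finite P] {u : P} (hu : u ∉ S) : IsOpen (Reg S φ u) := by
  simp only [Reg, if_neg hu, Set.ofPred_and, Set.ofPred_forall]
  have hφ : ∀ a, Continuous fun q : unitInterval × ℝ => φ a q.1 := fun a =>
    (φ a).continuous.comp continuous_fst
  exact (isOpen_iInter_of_finite fun a => isOpen_iInter_of_finite fun _ =>
      isOpen_iInter_of_finite fun _ => isOpen_lt continuous_snd (hφ a)).inter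
    (isOpen_iInter_of_finite fun a => isOpen_iInter_of_finite fun _ =>
      isOpen_iInter_of_finite fun _ => isOpen_lt (hφ a) continuous_snd)

lemma isOpen_crossing [Finite P] {u v : P} (hv : v ∉ S) :
    IsOpen {x | ∃ y, (x, y) ∈ Reg S φ u ∩ Reg S φ v} := by
  by_cases hu : u ∈ S
  · have : {x | ∃ y, (x, y) ∈ Reg S φ u ∩ Reg S φ v} = (fun x => (x, φ u x)) ⁻¹' Reg S φ v := by
      ext x
      simp [Reg, hu]
    rw [this]
    exact (isOpen_Reg hv).preimage (continuous_id.prodMk (φ u).continuous)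
  · have : {x | ∃ y, (x, y) ∈ Reg S φ u ∩ Reg S φ v} = Prod.fst '' (Reg S φ u ∩ Reg S φ v) := by
      ext x
      simp
    rw [this]
    exact isOpenMap_fst _ ((isOpen_Reg hu).inter (isOpen_Reg hv))

lemma infinite_crossing [Finite P] {u v : P} (huv : u ∉ S ∨ v ∉ S)
    (hne : (Reg S φ u ∩ Reg S φ v).Nonempty) :
    {x | ∃ y, (x, y) ∈ Reg S φ u ∩ Reg S φ v}.Infinite := by
  obtain ⟨⟨x, y⟩, hxy⟩ := hne
  have hopen : IsOpen {x | ∃ y, (x, y) ∈ Reg S φ u ∩ Reg S φ v} := by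
    rcases huv with hu | hv
    · simpa only [Set.inter_comm] using isOpen_crossing (u := v) hu
    · exact isOpen_crossing hv
  exact infinite_of_mem_nhds x (hopen.mem_nhds ⟨y, hxy⟩)

lemma mem_Ioo_envelopes_of_mem_Reg [Fintype P] {M : ℝ} {u : P} (hu : u ∉ S) {x : unitInterval}
    {y : ℝ} (h : (x, y) ∈ Reg S φ u) (hy : |y| < M) :
    y ∈ Set.Ioo (lowerEnvelope S φ M u x) (upperEnvelope S φ M u x) := by
  rw [Reg, if_neg hu] at h
  exact ⟨lowerEnvelope_lt_iff.2 ⟨(abs_lt.1 hy).1, h.2⟩,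
    lt_upperEnvelope_iff.2 ⟨(abs_lt.1 hy).2, h.1⟩⟩

end Region

theorem exists_extension_through_points {P κ : Type*} [Fintype P] [PartialOrder P] {S : Set P}
    {φ : P → C(unitInterval, ℝ)} (hφ : ∀ a ∈ S, ∀ b ∈ S, a < b → ∀ x, φ a x < φ b x)
    (K : Finset κ) (p : κ → unitInterval) (hp : Set.InjOn p K) (y : κ → ℝ) (A : κ → Finset P)
    (hA : ∀ k ∈ K, IsAntichain (· ≤ ·) (A k : Set P))
    (hpy : ∀ k ∈ K, ∀ a ∈ A k, (p k, y k) ∈ Reg S φ a) :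
    ∃ ψ : P → C(unitInterval, ℝ), (∀ u v, u < v → ∀ x, ψ u x < ψ v x) ∧
      (∀ k ∈ K, ∀ a ∈ A k, ψ a (p k) = y k) ∧ ∀ a ∈ S, ψ a = φ a := by
  obtain ⟨M, hM, hMy⟩ := exists_forall_abs_lt φ K y
  set L := lowerEnvelope S φ M
  set U := upperEnvelope S φ M
  have hLU : ∀ u x, L u x < U u x := lowerEnvelope_lt_upperEnvelope hM hφ
  have hy : ∀ k ∈ K, ∀ a ∈ (A k).filter (· ∉ S), y k ∈ Set.Ioo (L a (p k)) (U a (p k)) :=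
    fun k hk a ha => mem_Ioo_envelopes_of_mem_Reg (Finset.mem_filter.1 ha).2
      (hpy k hk a (Finset.mem_filter.1 ha).1) (hMy k hk)
  obtain ⟨s, hs_cont, hs, hs_mono, hs_node⟩ := exists_strictMono_interpolation K p hp
    (fun k => (A k).filter (· ∉ S))
    (fun k hk => (hA k hk).subset (Finset.coe_subset.2 (Finset.filter_subset _ _)))
    (fun k a => (y k - L a (p k)) / (U a (p k) - L a (p k)))
    fun k hk a ha => sub_div_sub_mem_Ioo (hy k hk a ha)
  let f : P → C(unitInterval, ℝ) := fun u => ⟨fun x => L u x + s u x * (U u x - L u x),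
    (continuous_lowerEnvelope S φ M u).add ((hs_cont u).mul
      ((continuous_upperEnvelope S φ M u).sub (continuous_lowerEnvelope S φ M u)))⟩
  have hf : ∀ u x, f u x ∈ Set.Ioo (L u x) (U u x) := fun u x =>
    add_mul_sub_mem_Ioo (hLU u x) (hs u x)
  refine ⟨fun u => if u ∈ S then φ u else f u, fun u v huv x => ?_, fun k hk a ha => ?_,
    fun a ha => if_pos ha⟩
  · by_cases hu : u ∈ S <;> by_cases hv : v ∈ S <;> simp only [hu, hv, if_true, if_false]
    · exact hφ u hu v hv huv x
    · exact (le_lowerEnvelope hu huv x).trans_lt (hf v x).1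
    · exact (hf u x).2.trans_le (upperEnvelope_le hv huv x)
    · exact add_mul_sub_lt_add_mul_sub (lowerEnvelope_mono huv.le x)
        (upperEnvelope_mono huv.le x) (Set.Ioo_subset_Icc_self (hs u x)) (hs_mono u v huv x)
        (hLU v x)
  · by_cases haS : a ∈ S
    · have h := hpy k hk a ha
      rw [Reg, if_pos haS] at h
      simp only [haS, if_true]
      exact h.symm
    · have ha' : a ∈ (A k).filter (· ∉ S) := Finset.mem_filter.2 ⟨ha, haS⟩
      have hgap : U a (p k) - L a (p k) ≠ 0 :=
        (sub_pos.2 ((hy k hk a ha').1.trans (hy k hk a ha').2)).ne'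
      simp only [haS, if_false]
      change L a (p k) + s a (p k) * (U a (p k) - L a (p k)) = y k
      rw [hs_node k hk a ha', div_mul_cancel₀ _ hgap]
      ring

lemma isAntichain_pair {P : Type*} [Preorder P] {a b : P} (hab : ¬a ≤ b) (hba : ¬b ≤ a) :
    IsAntichain (· ≤ ·) ({a, b} : Set P) :=
  IsAntichain.singleton.insert (fun _ hc _ => hc ▸ hba) (fun _ hc _ => hc ▸ hab)

theorem lt_iff_forall_lt_of_crossing {P X : Type*} [PartialOrder P] [Nonempty X]
    {ψ : P → X → ℝ} (hmono : ∀ u v, u < v → ∀ x, ψ u x < ψ v x)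
    (hcross : ∀ u v, ¬u ≤ v → ¬v ≤ u → ∃ x, ψ u x = ψ v x) (u v : P) :
    u < v ↔ ∀ x, ψ u x < ψ v x := by
  refine ⟨hmono u v, fun h => by_contra fun huv => ?_⟩
  obtain ⟨x, hx⟩ : ∃ x, ψ v x ≤ ψ u x := by
    by_cases hvu : v ≤ u
    · obtain rfl | hvu := hvu.eq_or_lt
      · exact ⟨Classical.arbitrary X, le_rfl⟩
      · exact ⟨Classical.arbitrary X, (hmono v u hvu _).le⟩
    · by_cases huv' : u ≤ v
      · exact absurd (huv'.lt_of_not_ge hvu) huv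
      · obtain ⟨x, hx⟩ := hcross u v huv' hvu
        exact ⟨x, hx.ge⟩
  exact (h x).not_ge hx

theorem stmt3_general {P : Type*} [Fintype P] [PartialOrder P] (S : Set P)
    (φ : P → C(unitInterval, ℝ))
    (hφ : ∀ a ∈ S, ∀ b ∈ S, (a < b ↔ ∀ x, φ a x < φ b x))
    (hreg : ∀ u v : P, u ≠ v → ¬ u < v → ¬ v < u → (Reg S φ u ∩ Reg S φ v).Nonempty) :
    ∃ ψ : P → C(unitInterval, ℝ),
      (∀ u v : P, u < v ↔ ∀ x, ψ u x < ψ v x) ∧ ∀ a ∈ S, ψ a = φ a := by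
  have hreg' : ∀ u v : P, ¬u ≤ v → ¬v ≤ u → (Reg S φ u ∩ Reg S φ v).Nonempty :=
    fun u v huv hvu => hreg u v (fun h => huv h.le) (fun h => huv h.le) (fun h => hvu h.le)
  set K := Finset.univ.filter fun k : P × P => ¬k.1 ≤ k.2 ∧ ¬k.2 ≤ k.1 ∧ (k.1 ∉ S ∨ k.2 ∉ S)
  have hK : ∀ k, k ∈ K ↔ ¬k.1 ≤ k.2 ∧ ¬k.2 ≤ k.1 ∧ (k.1 ∉ S ∨ k.2 ∉ S) := by simp [K]
  obtain ⟨p, hp, hinj⟩ := exists_injOn_forall_mem K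
    (fun k => {x | ∃ y, (x, y) ∈ Reg S φ k.1 ∩ Reg S φ k.2}) fun k hk =>
      infinite_crossing ((hK k).1 hk).2.2 (hreg' _ _ ((hK k).1 hk).1 ((hK k).1 hk).2.1)
  choose! y hy using hp
  obtain ⟨ψ, hψ, hψK, hψS⟩ := exists_extension_through_points (fun a ha b hb => (hφ a ha b hb).1)
    K p hinj y (fun k => {k.1, k.2})
    (fun k hk => by rw [Finset.coe_pair]; exact isAntichain_pair ((hK k).1 hk).1 ((hK k).1 hk).2.1)
    (fun k hk a ha => by
      simp only [Finset.mem_insert, Finset.mem_singleton] at ha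
      rcases ha with rfl | rfl
      exacts [(hy k hk).1, (hy k hk).2])
  refine ⟨ψ, lt_iff_forall_lt_of_crossing (ψ := fun u => ψ u) hψ fun u v huv hvu => ?_, hψS⟩
  by_cases huvS : u ∈ S ∧ v ∈ S
  · obtain ⟨⟨x, z⟩, hu, hv⟩ := hreg' u v huv hvu
    simp only [Reg, if_pos huvS.1, if_pos huvS.2, Set.mem_ofPred_eq] at hu hv
    exact ⟨x, by rw [hψS u huvS.1, hψS v huvS.2, ← hu, ← hv]⟩
  · have hk : (u, v) ∈ K := (hK _).2 ⟨huv, hvu, by tauto⟩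
    exact ⟨p (u, v), (hψK _ hk u (by simp)).trans (hψK _ hk v (by simp)).symm⟩

/-- if all regions of pairs of incomparable elements intersect, the partial
representation by piecewise linear functions extends to a full representation. -/
theorem stmt3 {P : Type*} [Fintype P] [PartialOrder P] (S : Set P)
    (φ : P → C(unitInterval, ℝ))
    (hpl : ∀ a ∈ S, IsPWL (φ a))
    (hφ : ∀ a ∈ S, ∀ b ∈ S, (a < b ↔ ∀ x, φ a x < φ b x))
    (hreg : ∀ u v : P, u ≠ v → ¬ u < v → ¬ v < u → (Reg S φ u ∩ Reg S φ v).Nonempty) :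
    ∃ ψ : P → C(unitInterval, ℝ),
      (∀ u v : P, u < v ↔ ∀ x, ψ u x < ψ v x) ∧ ∀ a ∈ S, ψ a = φ a :=
  stmt3_general S φ hφ hreg
end

section
/- Let G be a finite graph with at least two vertices. If G is disconnected, then the maximal proper strong modules of G are exactly the connected components of G. -/
/-- `M` is a module of `G`: every vertex outside `M` is adjacent to all or none of `M`. -/
def IsModule {V : Type*} (G : SimpleGraph V) (M : Set V) : Prop :=
  ∀ v ∉ M, (∀ u ∈ M, G.Adj v u) ∨ (∀ u ∈ M, ¬ G.Adj v u)

/-- A strong module: a module that does not properly overlap any module. -/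
def IsStrongModule {V : Type*} (G : SimpleGraph V) (M : Set V) : Prop :=
  IsModule G M ∧ ∀ N : Set V, IsModule G N → N ⊆ M ∨ M ⊆ N ∨ M ∩ N = ∅

/-- A maximal proper strong module of `G`. -/
def IsMaxStrongModule {V : Type*} (G : SimpleGraph V) (M : Set V) : Prop :=
  IsStrongModule G M ∧ M ⊂ Set.univ ∧
    ¬ ∃ N : Set V, IsStrongModule G N ∧ M ⊂ N ∧ N ⊂ Set.univ

/-!
A module meeting two connected components is closed under adjacency: a neighbour `q ∉ N` of a
vertex of `N` would have to see all of `N`, hence lie in both components. So such a module is a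
union of components. Every component `C` is therefore strong, and a proper strong module `N`
cannot strictly contain `C`: otherwise `N` misses some component `D`, and the module `C ∪ D`
properly overlaps `N`. Hence proper strong modules lie inside single components, and the
maximal ones are the components themselves.
-/

section

open SimpleGraph SimpleGraph.ConnectedComponent

variable {V : Type*} {G : SimpleGraph V}

lemma isModule_of_adj_mem {M : Set V} (hM : ∀ u ∈ M, ∀ v, G.Adj u v → v ∈ M) :
    IsModule G M :=
  fun v hv ↦ Or.inr fun u hu hvu ↦ hv (hM u hu v hvu.symm)

lemma isModule_supp (C : G.ConnectedComponent) : IsModule G C.supp :=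
  isModule_of_adj_mem fun _ hu _ ↦ C.mem_supp_of_adj_mem_supp hu

lemma isModule_supp_union_supp (C D : G.ConnectedComponent) : IsModule G (C.supp ∪ D.supp) :=
  isModule_of_adj_mem fun _ hu _ hadj ↦
    hu.imp (C.mem_supp_of_adj_mem_supp · hadj) (D.mem_supp_of_adj_mem_supp · hadj)

lemma supp_ne_univ (hdis : ¬ G.Connected) (C : G.ConnectedComponent) : C.supp ≠ Set.univ := by
  intro h
  obtain ⟨v, -⟩ := C.nonempty_supp
  have : Nonempty V := ⟨v⟩
  exact hdis ⟨fun u w ↦ C.reachable_of_mem_supp (h ▸ Set.mem_univ u) (h ▸ Set.mem_univ w)⟩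

namespace IsModule

lemma adj_mem {N : Set V} (hN : IsModule G N) {x y : V} (hx : x ∈ N) (hy : y ∈ N)
    (hxy : G.connectedComponentMk x ≠ G.connectedComponentMk y) {p q : V} (hp : p ∈ N)
    (hpq : G.Adj p q) : q ∈ N := by
  by_contra hq
  rcases hN q hq with hall | hnone
  · exact hxy ((connectedComponentMk_eq_of_adj (hall x hx)).symm.trans
      (connectedComponentMk_eq_of_adj (hall y hy)))
  · exact hnone p hp hpq.symm

lemma supp_subset {N : Set V} (hN : IsModule G N) {x y : V} (hx : x ∈ N) (hy : y ∈ N)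
    (hxy : G.connectedComponentMk x ≠ G.connectedComponentMk y) :
    (G.connectedComponentMk x).supp ⊆ N := by
  intro v hv
  have hreach : Relation.ReflTransGen G.Adj x v :=
    (reachable_iff_reflTransGen x v).mp (ConnectedComponent.exact hv.symm)
  clear hv
  induction hreach with
  | refl => exact hx
  | tail _ hadj ih => exact hN.adj_mem hx hy hxy ih hadj

end IsModule

lemma isStrongModule_supp (C : G.ConnectedComponent) : IsStrongModule G C.supp := by
  refine ⟨isModule_supp C, fun N hN ↦ ?_⟩
  by_cases hNC : N ⊆ C.supp
  · exact Or.inl hNC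
  rcases (C.supp ∩ N).eq_empty_or_nonempty with hdisj | ⟨u, huC, huN⟩
  · exact Or.inr (Or.inr hdisj)
  obtain ⟨x, hxN, hxC⟩ := Set.not_subset.mp hNC
  have hux : G.connectedComponentMk u ≠ G.connectedComponentMk x :=
    fun h ↦ hxC (h.symm.trans huC)
  exact Or.inr (Or.inl (huC ▸ hN.supp_subset huN hxN hux))

namespace IsStrongModule

lemma subset_supp_of_supp_subset {N : Set V} (hN : IsStrongModule G N) (hNU : N ≠ Set.univ)
    {C : G.ConnectedComponent} (hCN : C.supp ⊆ N) : N ⊆ C.supp := by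
  by_contra hNC
  obtain ⟨x, hxN, hxC⟩ := Set.not_subset.mp hNC
  obtain ⟨u, huC⟩ := C.nonempty_supp
  obtain ⟨v, hvN⟩ := (Set.ne_univ_iff_exists_notMem N).mp hNU
  have hxu : G.connectedComponentMk x ≠ G.connectedComponentMk u := fun h ↦ hxC (h.trans huC)
  rcases hN.2 _ (isModule_supp_union_supp C (G.connectedComponentMk v)) with h | h | h
  · exact hvN (h (Or.inr rfl))
  · rcases h hxN with hxC' | hxv
    · exact hxC hxC'
    · exact hvN (hN.1.supp_subset hxN (hCN huC) hxu hxv.symm)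
  · exact h.subset ⟨hCN huC, Or.inl huC⟩

lemma subset_supp {N : Set V} (hN : IsStrongModule G N) (hNU : N ≠ Set.univ) {u : V}
    (hu : u ∈ N) : N ⊆ (G.connectedComponentMk u).supp := by
  rcases hN.2 _ (isModule_supp (G.connectedComponentMk u)) with h | h | h
  · exact hN.subset_supp_of_supp_subset hNU h
  · exact h
  · exact (h.subset ⟨hu, rfl⟩).elim

end IsStrongModule

lemma isMaxStrongModule_supp (hdis : ¬ G.Connected) (C : G.ConnectedComponent) :
    IsMaxStrongModule G C.supp := by
  refine ⟨isStrongModule_supp C, Set.ssubset_univ_iff.mpr (supp_ne_univ hdis C), ?_⟩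
  rintro ⟨N, hN, hCN, hNU⟩
  obtain ⟨u, hu⟩ := C.nonempty_supp
  have hNC := hN.subset_supp (Set.ssubset_univ_iff.mp hNU) (hCN.subset hu)
  exact hCN.not_subset (hu ▸ hNC)

end

theorem stmt8_general {V : Type*} (G : SimpleGraph V)
    (hdis : ¬ G.Connected) (M : Set V) :
    IsMaxStrongModule G M ↔
      ∃ c : G.ConnectedComponent, M = {v : V | G.connectedComponentMk v = c} := by
  refine ⟨fun ⟨hM, hMU, hMmax⟩ ↦ ?_, fun ⟨C, hC⟩ ↦ hC ▸ isMaxStrongModule_supp hdis C⟩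
  obtain ⟨C, hMC⟩ : ∃ C : G.ConnectedComponent, M ⊆ C.supp := by
    rcases M.eq_empty_or_nonempty with hM0 | ⟨u, hu⟩
    · obtain ⟨v, -⟩ := Set.exists_of_ssubset hMU
      exact ⟨G.connectedComponentMk v, hM0 ▸ Set.empty_subset _⟩
    · exact ⟨_, hM.subset_supp hMU.ne hu⟩
  refine ⟨C, hMC.eq_of_not_ssubset fun hlt ↦ hMmax ⟨C.supp, isStrongModule_supp C, hlt, ?_⟩⟩
  exact Set.ssubset_univ_iff.mpr (supp_ne_univ hdis C)

/-- in a disconnected graph with at least two vertices, the maximal proper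
strong modules are exactly the connected components. -/
theorem stmt8 {V : Type*} [Fintype V] (G : SimpleGraph V)
    (hcard : 1 < Fintype.card V) (hdis : ¬ G.Connected) (M : Set V) :
    IsMaxStrongModule G M ↔
      ∃ c : G.ConnectedComponent, M = {v : V | G.connectedComponentMk v = c} :=
  stmt8_general G hdis M
end

section
/- If G is a finite graph with at least two vertices, then the collection of maximal proper strong modules of G forms a partition of V(G). -/
/-!
Every vertex `v` lies in a maximal proper strong module: enlarge the strong module `{v}` inside
the finite family of proper strong modules; the same singleton shows that `∅` is not maximal.
Two maximal proper strong modules through `v` cannot overlap properly, since one of them is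
strong, so they are nested, hence equal by maximality.
-/

namespace IsStrongModule

variable {V : Type*} {G : SimpleGraph V}

theorem singleton (v : V) : IsStrongModule G {v} := by
  refine ⟨fun u _ => ?_, fun N _ => ?_⟩
  · by_cases h : G.Adj u v
    · exact Or.inl fun w hw => (Set.eq_of_mem_singleton hw) ▸ h
    · exact Or.inr fun w hw => (Set.eq_of_mem_singleton hw) ▸ h
  · by_cases hv : v ∈ N
    · exact Or.inr (Or.inl (Set.singleton_subset_iff.mpr hv))
    · exact Or.inr (Or.inr (Set.singleton_inter_eq_empty.mpr hv))

end IsStrongModule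

theorem isMaxStrongModule_iff_maximal {V : Type*} {G : SimpleGraph V} {M : Set V} :
    IsMaxStrongModule G M ↔ Maximal (fun N => IsStrongModule G N ∧ N ⊂ Set.univ) M := by
  refine ⟨fun ⟨hM, hMuniv, hmax⟩ => ⟨⟨hM, hMuniv⟩, fun N hN hMN => ?_⟩,
    fun ⟨⟨hM, hMuniv⟩, hmax⟩ => ⟨hM, hMuniv, fun ⟨N, hN, hMN, hNuniv⟩ => ?_⟩⟩
  · by_contra hNM
    exact hmax ⟨N, hN.1, ⟨hMN, hNM⟩, hN.2⟩
  · exact hMN.2 (hmax ⟨hN, hNuniv⟩ hMN.1)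

namespace IsMaxStrongModule

variable {V : Type*} {G : SimpleGraph V}

theorem exists_superset [Finite V] {M : Set V} (hM : IsStrongModule G M)
    (hMuniv : M ⊂ Set.univ) : ∃ N, M ⊆ N ∧ IsMaxStrongModule G N := by
  obtain ⟨N, hMN, hN⟩ :=
    (Set.toFinite {N : Set V | IsStrongModule G N ∧ N ⊂ Set.univ}).exists_le_maximal
      (a := M) ⟨hM, hMuniv⟩
  exact ⟨N, hMN, isMaxStrongModule_iff_maximal.mpr hN⟩

theorem exists_mem [Finite V] [Nontrivial V] (v : V) : ∃ M, IsMaxStrongModule G M ∧ v ∈ M := by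
  obtain ⟨M, hvM, hM⟩ := exists_superset (G := G) (IsStrongModule.singleton v)
    (Set.ssubset_univ_iff.mpr (Set.singleton_ne_univ v))
  exact ⟨M, hM, Set.singleton_subset_iff.mp hvM⟩

theorem eq_of_mem {M N : Set V} {v : V} (hM : IsMaxStrongModule G M)
    (hN : IsMaxStrongModule G N) (hvM : v ∈ M) (hvN : v ∈ N) : M = N := by
  have hM' := isMaxStrongModule_iff_maximal.mp hM
  have hN' := isMaxStrongModule_iff_maximal.mp hN
  rcases hN.1.2 M hM.1.1 with hMN | hNM | hdisj
  · exact hM'.eq_of_le hN'.prop hMN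
  · exact (hN'.eq_of_le hM'.prop hNM).symm
  · exact (Set.eq_empty_iff_forall_notMem.mp hdisj v ⟨hvN, hvM⟩).elim

end IsMaxStrongModule

theorem not_isMaxStrongModule_empty {V : Type*} [Nontrivial V] (G : SimpleGraph V) :
    ¬ IsMaxStrongModule G (∅ : Set V) := by
  obtain ⟨v⟩ := ‹Nontrivial V›.to_nonempty
  exact fun h => h.2.2 ⟨{v}, IsStrongModule.singleton v, Set.singleton_nonempty v |>.empty_ssubset,
    Set.ssubset_univ_iff.mpr (Set.singleton_ne_univ v)⟩

/-- the maximal proper strong modules of a graph with at least two vertices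
form a partition of the vertex set. -/
theorem stmt10 {V : Type*} [Fintype V] (G : SimpleGraph V)
    (hcard : 1 < Fintype.card V) :
    Setoid.IsPartition {M : Set V | IsMaxStrongModule G M} := by
  have : Nontrivial V := Fintype.one_lt_card_iff_nontrivial.mp hcard
  refine ⟨not_isMaxStrongModule_empty G, fun v => ?_⟩
  obtain ⟨M, hM, hvM⟩ := IsMaxStrongModule.exists_mem (G := G) v
  exact ⟨M, ⟨hM, hvM⟩, fun N ⟨hN, hvN⟩ => hN.eq_of_mem hM hvN hvM⟩
end

section
/- Every finite poset P admits a representation by continuous functions: there exists a map ψ assigning to each element of P a continuous function [0,1] → ℝ such that u < v in P if and only if ψ(u)(x) < ψ(v)(x) for all x ∈ [0,1] (in particular, functions of incomparable elements intersect). -/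
/-!
Choose distinct points `t w ∈ [0,1]` and continuous `f w > 0` such that at `t u` the value of
`f u` dominates the sum of all other `f w` (one plus `|P|` times a Urysohn function that is `1`
at `t u` and `0` at the other points). Put `ψ u = ∑_{w ≤ u} f w`. If `u < v`, the sum for `v`
has strictly more positive terms. If `u ≰ v`, then at `t u` the sum for `v` omits `f u`, so it
is at most `f u (t u) ≤ ψ u (t u)`.
-/

open Function Finset

section Separation

variable {X ι : Type*} [TopologicalSpace X] [CompletelyRegularSpace X] [T1Space X] {t : ι → X}

lemma exists_continuous_one_at_zero_at_others [Finite ι] (ht : Injective t) (i : ι) :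
    ∃ g : C(X, ℝ), (∀ x, 0 ≤ g x) ∧ g (t i) = 1 ∧ ∀ j ≠ i, g (t j) = 0 := by
  have hK : IsClosed (t '' {i}ᶜ) := ((Set.toFinite _).image t).isClosed
  have hi : t i ∉ t '' {i}ᶜ := fun ⟨j, hj, hji⟩ ↦ hj (ht hji)
  obtain ⟨f, hf, hfi, hfK⟩ := CompletelyRegularSpace.completely_regular _ _ hK hi
  refine ⟨⟨fun x ↦ 1 - f x, continuous_const.sub (continuous_subtype_val.comp hf)⟩,
    fun x ↦ sub_nonneg.2 (f x).2.2, by simp [hfi], fun j hj ↦ ?_⟩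
  simp [hfK (Set.mem_image_of_mem t (Set.mem_compl_singleton_iff.2 hj))]

lemma exists_pos_family_dominant_at_points [Fintype ι] [DecidableEq ι] (ht : Injective t) :
    ∃ f : ι → C(X, ℝ), (∀ i x, 0 < f i x) ∧
      ∀ i, ∑ j ∈ univ.erase i, f j (t i) ≤ f i (t i) := by
  choose g hg_nonneg hg_self hg_other using exists_continuous_one_at_zero_at_others ht
  refine ⟨fun i ↦ 1 + (Fintype.card ι : ℝ) • g i, fun i x ↦ ?_, fun i ↦ ?_⟩
  · have := hg_nonneg i x
    simp only [ContinuousMap.add_apply, ContinuousMap.one_apply, ContinuousMap.smul_apply,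
      smul_eq_mul]
    positivity
  · have hothers : ∀ j ∈ univ.erase i, (1 + (Fintype.card ι : ℝ) • g j) (t i) = 1 :=
      fun j hj ↦ by simp [hg_other j i (ne_of_mem_erase hj).symm]
    rw [sum_congr rfl hothers]
    have hcard : ((Fintype.card ι - 1 : ℕ) : ℝ) ≤ Fintype.card ι := by
      exact_mod_cast Nat.sub_le _ _
    simp only [sum_const, card_erase_of_mem (mem_univ i), card_univ, nsmul_eq_mul, mul_one,
      ContinuousMap.add_apply, ContinuousMap.one_apply, ContinuousMap.smul_apply, smul_eq_mul,
      hg_self]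
    linarith

end Separation

section SumBelow

variable {X P : Type*} [TopologicalSpace X] [Fintype P] [PartialOrder P] [DecidableLE P]
  {f : P → C(X, ℝ)} {u v : P}

def sumBelow (f : P → C(X, ℝ)) (u : P) : C(X, ℝ) := ∑ w ∈ {w | w ≤ u}, f w

lemma sumBelow_apply (f : P → C(X, ℝ)) (u : P) (x : X) :
    sumBelow f u x = ∑ w ∈ {w | w ≤ u}, f w x := by
  simp [sumBelow]

lemma sumBelow_lt_sumBelow (hf : ∀ w x, 0 < f w x) (huv : u < v) (x : X) :
    sumBelow f u x < sumBelow f v x := by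
  rw [sumBelow_apply, sumBelow_apply]
  refine Finset.sum_lt_sum_of_subset (i := v) ?_ (by simp) (by simpa using huv.not_ge)
    (hf v x) fun w _ _ ↦ (hf w x).le
  intro w
  simpa using fun hwu ↦ hwu.trans huv.le

lemma sumBelow_le_sumBelow_of_not_le [DecidableEq P] (hf : ∀ w x, 0 ≤ f w x) {x : X}
    (hdom : ∑ w ∈ univ.erase u, f w x ≤ f u x) (huv : ¬u ≤ v) :
    sumBelow f v x ≤ sumBelow f u x := by
  rw [sumBelow_apply, sumBelow_apply]
  calc ∑ w ∈ {w | w ≤ v}, f w x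
      ≤ ∑ w ∈ univ.erase u, f w x :=
        Finset.sum_le_sum_of_subset_of_nonneg
          (fun w hw ↦ Finset.mem_erase.2 ⟨by rintro rfl; simp_all, mem_univ w⟩)
          fun w _ _ ↦ hf w x
    _ ≤ f u x := hdom
    _ ≤ ∑ w ∈ {w | w ≤ u}, f w x :=
        Finset.single_le_sum (fun w _ ↦ hf w x) (by simp)

end SumBelow

theorem exists_representation_of_injective {X P : Type*} [TopologicalSpace X]
    [CompletelyRegularSpace X] [T1Space X] [Fintype P] [PartialOrder P] {t : P → X}
    (ht : Injective t) :
    ∃ ψ : P → C(X, ℝ), ∀ u v : P, u < v ↔ ∀ x, ψ u x < ψ v x := by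
  classical
  obtain ⟨f, hf_pos, hf_dom⟩ := exists_pos_family_dominant_at_points ht
  refine ⟨sumBelow f, fun u v ↦ ⟨sumBelow_lt_sumBelow hf_pos, fun h ↦ ?_⟩⟩
  have huv : u ≤ v := by
    by_contra huv
    exact (sumBelow_le_sumBelow_of_not_le (fun w x ↦ (hf_pos w x).le) (hf_dom u) huv).not_gt
      (h (t u))
  exact huv.lt_of_ne (by rintro rfl; exact (h (t u)).false)

/-- every finite poset admits a representation by continuous functions on
`[0,1]`: `u < v` iff the function of `u` is pointwise strictly below that of `v`. -/
theorem stmt13 {P : Type*} [Fintype P] [PartialOrder P] :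
    ∃ ψ : P → C(unitInterval, ℝ),
      ∀ u v : P, u < v ↔ ∀ x : unitInterval, ψ u x < ψ v x := by
  have : Infinite unitInterval := (Set.Icc_infinite zero_lt_one).to_subtype
  let t : P ↪ unitInterval :=
    (Fintype.equivFin P).toEmbedding.trans (Fin.valEmbedding.trans (Infinite.natEmbedding _))
  exact exists_representation_of_injective t.injective
end

section
/- Complements of finite comparability graphs are exactly the function graphs: a finite graph G is the intersection graph of a family of continuous functions [0,1] → ℝ (vertices u, v adjacent iff their functions intersect) if and only if the complement of G admits a transitive orientation. -/
/-!
If two functions of a representation never meet, the intermediate value theorem puts one strictly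
below the other everywhere, and "lies below" orients the complement transitively. Conversely, for a
strict order `r` the strictly `r`-monotone maps `V → ℝ` form a convex, hence path-connected, set
which contains, for each incomparable pair `(a, b)`, a map with `f a < f b`. Along a path `γ`
through all these maps, the functions `t ↦ γ t v` are strictly ordered on comparable pairs and
cross on incomparable ones.
-/

/-- `G` admits a transitive orientation. -/
def HasTransOrientation {V : Type*} (G : SimpleGraph V) : Prop :=
  ∃ r : V → V → Prop, (∀ a b c : V, r a b → r b c → r a c) ∧
    (∀ a b : V, r a b → ¬ r b a) ∧ ∀ a b : V, G.Adj a b ↔ (r a b ∨ r b a)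

section

open Set Finset

theorem forall_lt_or_forall_gt_of_forall_ne {X α : Type*} [TopologicalSpace X]
    [PreconnectedSpace X] [LinearOrder α] [TopologicalSpace α] [OrderClosedTopology α]
    {f g : X → α} (hf : Continuous f) (hg : Continuous g) (hfg : ∀ x, f x ≠ g x) :
    (∀ x, f x < g x) ∨ ∀ x, g x < f x := by
  by_contra! ⟨⟨a, ha⟩, ⟨b, hb⟩⟩
  obtain ⟨x, hx⟩ := intermediate_value_univ₂ hg hf ha hb
  exact hfg x hx.symm

theorem hasTransOrientation_compl_of_functionRep {V X : Type*} [TopologicalSpace X]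
    [PreconnectedSpace X] [Nonempty X] (G : SimpleGraph V) (ψ : V → C(X, ℝ))
    (hψ : ∀ u v, u ≠ v → (G.Adj u v ↔ ∃ x, ψ u x = ψ v x)) :
    HasTransOrientation Gᶜ := by
  obtain ⟨x₀⟩ := ‹Nonempty X›
  refine ⟨fun u v => ∀ x, ψ u x < ψ v x, fun _ _ _ h₁ h₂ x => (h₁ x).trans (h₂ x),
    fun _ _ h₁ h₂ => (h₁ x₀).not_gt (h₂ x₀), fun u v => ?_⟩
  rw [SimpleGraph.compl_adj]
  constructor
  · rintro ⟨huv, hnadj⟩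
    rw [hψ u v huv, not_exists] at hnadj
    exact forall_lt_or_forall_gt_of_forall_ne (ψ u).continuous (ψ v).continuous hnadj
  · intro h
    have huv : u ≠ v := by
      rintro rfl
      exact h.elim (fun h => (h x₀).false) fun h => (h x₀).false
    refine ⟨huv, ?_⟩
    rw [hψ u v huv]
    rintro ⟨x, hx⟩
    exact h.elim (fun h => (h x).ne hx) fun h => (h x).ne' hx

theorem IsPathConnected.exists_path_through_finite {X ι : Type*} [TopologicalSpace X] [Finite ι]
    {s : Set X} (hs : IsPathConnected s) (p : ι → X) (hp : ∀ i, p i ∈ s) :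
    ∃ γ : C(unitInterval, X), range γ ⊆ s ∧ ∀ i, p i ∈ range γ := by
  obtain ⟨x, hx⟩ := hs.nonempty
  obtain ⟨n, ⟨e⟩⟩ := Finite.exists_equiv_fin ι
  obtain ⟨γ, hγs, hγp⟩ := hs.exists_path_through_family (Fin.cons x (p ∘ e.symm))
    (Fin.cases hx fun i => hp _)
  refine ⟨γ, hγs, fun i => ?_⟩
  simpa using hγp (e i).succ

variable {V : Type*} (r : V → V → Prop)

theorem convex_setOf_relStrictMono :
    Convex ℝ {f : V → ℝ | ∀ a b, r a b → f a < f b} := by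
  refine convex_iff_forall_pos.2 fun f hf g hg s t hs ht _ a b hab => ?_
  simp only [Pi.add_apply, Pi.smul_apply, smul_eq_mul]
  exact add_lt_add (mul_lt_mul_of_pos_left (hf a b hab) hs) (mul_lt_mul_of_pos_left (hg a b hab) ht)

variable [Fintype V] [IsStrictOrder V r]

theorem card_filter_rel_lt_of_rel [DecidableRel r] {a b : V} (hab : r a b) :
    #{w | r w a} < #{w | r w b} := by
  refine card_lt_card ⟨fun w hw => ?_, fun h => ?_⟩
  · simp only [mem_filter, Finset.mem_univ, true_and] at hw ⊢
    exact IsTrans.trans w a b hw hab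
  · exact irrefl a (by simpa using h (by simpa using hab))

theorem exists_relStrictMono_lt {a b : V} (hab : a ≠ b) (hba : ¬ r b a) :
    ∃ f : V → ℝ, (∀ x y, r x y → f x < f y) ∧ f a < f b := by
  classical
  -- The predecessor count, raised by `card V` on the up-set of `b`, so that `b` overtakes `a`.
  let above (v : V) : ℕ := if b = v ∨ r b v then 1 else 0
  have above_mono {x y : V} (hxy : r x y) : above x ≤ above y := by
    have : b = x ∨ r b x → r b y := Or.rec (· ▸ hxy) (IsTrans.trans b x y · hxy)
    simp only [above]
    split_ifs <;> tauto
  let f (v : V) : ℕ := #{w | r w v} + Fintype.card V * above v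
  have hf {x y : V} (hxy : r x y) : f x < f y :=
    add_lt_add_of_lt_of_le (card_filter_rel_lt_of_rel r hxy)
      (Nat.mul_le_mul_left _ (above_mono hxy))
  have hfab : f a < f b := by
    have : #{w | r w a} < Fintype.card V :=
      card_lt_univ_of_notMem (x := a) (by simpa using irrefl a)
    simp only [f, above, hab.symm, hba, or_self, ↓reduceIte, mul_zero, add_zero, true_or, mul_one]
    omega
  exact ⟨fun v => f v, fun x y hxy => Nat.cast_lt.2 (hf hxy), Nat.cast_lt.2 hfab⟩

theorem exists_functionRep_of_isStrictOrder :
    ∃ ψ : V → C(unitInterval, ℝ), (∀ u v, r u v → ∀ x, ψ u x < ψ v x) ∧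
      ∀ u v, u ≠ v → ¬ r u v → ¬ r v u → ∃ x, ψ u x = ψ v x := by
  classical
  let S := {f : V → ℝ | ∀ a b, r a b → f a < f b}
  have hS : S.Nonempty :=
    ⟨fun v => #{w | r w v}, fun a b h => Nat.cast_lt.2 (card_filter_rel_lt_of_rel r h)⟩
  choose g hgS hglt using
    fun p : {p : V × V // p.1 ≠ p.2 ∧ ¬ r p.2 p.1} => exists_relStrictMono_lt r p.2.1 p.2.2
  obtain ⟨γ, hγS, hγg⟩ :=
    ((convex_setOf_relStrictMono r).isPathConnected hS).exists_path_through_finite g hgS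
  refine ⟨fun v => ⟨fun x => γ x v, (continuous_apply v).comp γ.continuous⟩,
    fun u v h x => hγS ⟨x, rfl⟩ u v h, fun u v huv huv' hvu' => ?_⟩
  obtain ⟨x, hx⟩ := hγg ⟨(u, v), huv, hvu'⟩
  obtain ⟨y, hy⟩ := hγg ⟨(v, u), huv.symm, huv'⟩
  refine intermediate_value_univ₂ (a := x) (b := y) ((continuous_apply u).comp γ.continuous)
    ((continuous_apply v).comp γ.continuous) ?_ ?_
  · exact (hx ▸ hglt _).le
  · exact (hy ▸ hglt _).le

end

/-- a finite graph is a function graph (intersection graph of continuous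
functions `[0,1] → ℝ`) iff its complement admits a transitive orientation. -/
theorem stmt14 {V : Type*} [Fintype V] (G : SimpleGraph V) :
    (∃ ψ : V → C(unitInterval, ℝ),
      ∀ u v : V, u ≠ v → (G.Adj u v ↔ ∃ x : unitInterval, ψ u x = ψ v x)) ↔
    HasTransOrientation Gᶜ := by
  refine ⟨fun ⟨ψ, hψ⟩ => hasTransOrientation_compl_of_functionRep G ψ hψ, ?_⟩
  rintro ⟨r, htrans, hasymm, hcompl⟩
  have : IsStrictOrder V r := { irrefl := fun a h => hasymm a a h h, trans := htrans }
  obtain ⟨ψ, hlt, heq⟩ := exists_functionRep_of_isStrictOrder r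
  refine ⟨ψ, fun u v huv => ⟨fun hadj => ?_, fun ⟨x, hx⟩ => ?_⟩⟩
  · obtain ⟨huv', hvu'⟩ := not_or.1 ((hcompl u v).not.1 (by simp [hadj]))
    exact heq u v huv huv' hvu'
  · by_contra hnadj
    rcases (hcompl u v).1 ⟨huv, hnadj⟩ with h | h
    exacts [(hlt u v h x).ne hx, (hlt v u h x).ne' hx]
end

section
/- Let G be a finite comparability graph, let φ be a partial representation of G defined on R ⊆ V(G) (a function representation of the induced subgraph G[R] by continuous functions [0,1] → ℝ of the complement-order type), let M be a strong module of G with M ∩ R ≠ ∅, let u ∈ M be a vertex, and let a ∈ R \ M be adjacent to u. Then for any two transitive orientations P, P' of G that both respect φ, the edge au receives the same orientation in P and in P'. -/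
/-- `r` is a transitive orientation of `G`. -/
def IsTransOrientation {V : Type*} (G : SimpleGraph V) (r : V → V → Prop) : Prop :=
  (∀ a b c : V, r a b → r b c → r a c) ∧ (∀ a b : V, r a b → ¬ r b a) ∧
    ∀ a b : V, G.Adj a b ↔ (r a b ∨ r b a)

section TransOrientation

variable {V : Type*} {G : SimpleGraph V} {r : V → V → Prop} {a b c : V}

namespace IsTransOrientation

lemma trans (hr : IsTransOrientation G r) (hab : r a b) (hbc : r b c) : r a c :=
  hr.1 a b c hab hbc

lemma asymm (hr : IsTransOrientation G r) (hab : r a b) : ¬ r b a :=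
  hr.2.1 a b hab

lemma adj_of_rel (hr : IsTransOrientation G r) (hab : r a b) : G.Adj a b :=
  (hr.2.2 a b).2 (Or.inl hab)

lemma adj_of_rel' (hr : IsTransOrientation G r) (hba : r b a) : G.Adj a b :=
  (hr.2.2 a b).2 (Or.inr hba)

lemma rel_or_rel (hr : IsTransOrientation G r) (hab : G.Adj a b) : r a b ∨ r b a :=
  (hr.2.2 a b).1 hab

lemma rel_of_adj_of_not_rel (hr : IsTransOrientation G r) (hab : G.Adj a b) (h : ¬ r b a) :
    r a b :=
  (hr.rel_or_rel hab).resolve_right h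

end IsTransOrientation

lemma IsModule.adj_of_adj {M : Set V} (hM : IsModule G M) {u w : V} (ha : a ∉ M) (hu : u ∈ M)
    (hau : G.Adj a u) (hw : w ∈ M) : G.Adj a w :=
  (hM a ha).elim (fun h => h w hw) (fun h => absurd hau (h u hu))

/-- The module that overlaps `M` when `a` sees `M` from both sides in the orientation `r`. -/
def gallaiSet (r : V → V → Prop) (M : Set V) (a : V) : Set V :=
  {w | w ∈ M ∧ r a w} ∪
    {v | v ∉ M ∧ (∀ w ∈ M, r w a → r w v) ∧ ∀ w ∈ M, r a w → r v w}

variable {M : Set V}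

lemma isModule_gallaiSet (hr : IsTransOrientation G r) (hM : IsModule G M)
    (hall : ∀ w ∈ M, G.Adj a w) {u b : V} (hu : u ∈ M) (hb : b ∈ M) (hau : r a u)
    (hba : r b a) : IsModule G (gallaiSet r M a) := by
  intro v hv
  by_cases hvM : v ∈ M
  · have hva : r v a := (hr.rel_or_rel (hall v hvM)).resolve_left fun h => hv (Or.inl ⟨hvM, h⟩)
    left
    rintro x (⟨-, hax⟩ | ⟨-, hbelow, -⟩)
    · exact hr.adj_of_rel (hr.trans hva hax)
    · exact hr.adj_of_rel (hbelow v hvM hva)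
  rcases hM v hvM with hone | hnone
  · left
    rintro x (⟨hxM, -⟩ | ⟨-, hbelow, habove⟩)
    · exact hone x hxM
    by_cases h : ∀ w ∈ M, r w a → r w v
    · have hvS : ¬ ∀ w ∈ M, r a w → r v w := fun h' => hv (Or.inr ⟨hvM, h, h'⟩)
      push Not at hvS
      obtain ⟨w, hwM, haw, hvw⟩ := hvS
      have hwv : r w v := hr.rel_of_adj_of_not_rel (hone w hwM).symm hvw
      exact hr.adj_of_rel' (hr.trans (habove w hwM haw) hwv)
    · push Not at h
      obtain ⟨w, hwM, hwa, hwv⟩ := h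
      have hvw : r v w := hr.rel_of_adj_of_not_rel (hone w hwM) hwv
      exact hr.adj_of_rel (hr.trans hvw (hbelow w hwM hwa))
  · right
    rintro x (⟨hxM, -⟩ | ⟨-, hbelow, habove⟩)
    · exact hnone x hxM
    intro hvx
    rcases hr.rel_or_rel hvx with hvx | hxv
    · exact hnone u hu (hr.adj_of_rel (hr.trans hvx (habove u hu hau)))
    · exact hnone b hb (hr.adj_of_rel' (hr.trans (hbelow b hb hba) hxv))

lemma IsStrongModule.not_rel_of_rel (hM : IsStrongModule G M) (hr : IsTransOrientation G r)
    (ha : a ∉ M) (hall : ∀ w ∈ M, G.Adj a w) {u b : V} (hu : u ∈ M) (hb : b ∈ M)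
    (hau : r a u) : ¬ r b a := by
  intro hba
  have haN : a ∈ gallaiSet r M a :=
    Or.inr ⟨ha, fun _ _ h => h, fun _ _ h => h⟩
  have hbN : b ∉ gallaiSet r M a := by
    rintro (⟨-, hab⟩ | ⟨hbM', -⟩)
    exacts [hr.asymm hab hba, hbM' hb]
  have huN : u ∈ M ∩ gallaiSet r M a := ⟨hu, Or.inl ⟨hu, hau⟩⟩
  rcases hM.2 _ (isModule_gallaiSet hr hM.1 hall hu hb hau hba) with h | h | h
  · exact ha (h haN)
  · exact hbN (h hb)
  · simp [h] at huN

lemma IsStrongModule.rel_iff_rel (hM : IsStrongModule G M) (hr : IsTransOrientation G r)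
    (ha : a ∉ M) {u b : V} (hu : u ∈ M) (hb : b ∈ M) (hau : G.Adj a u) : r a u ↔ r a b := by
  have hall : ∀ w ∈ M, G.Adj a w := fun w hw => hM.1.adj_of_adj ha hu hau hw
  constructor
  · intro h
    exact hr.rel_of_adj_of_not_rel (hall b hb) (hM.not_rel_of_rel hr ha hall hu hb h)
  · intro h
    exact hr.rel_of_adj_of_not_rel hau (hM.not_rel_of_rel hr ha hall hb hu h)

end TransOrientation

lemma rel_of_rel_of_respects {V X β : Type*} [Nonempty X] [Preorder β] {G : SimpleGraph V}
    {r r' : V → V → Prop} {R : Set V} {φ : V → X → β} (hr : IsTransOrientation G r)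
    (hr' : IsTransOrientation G r') (hrφ : ∀ b ∈ R, ∀ c ∈ R, r b c → ∀ x, φ b x < φ c x)
    (hr'φ : ∀ b ∈ R, ∀ c ∈ R, r' b c → ∀ x, φ b x < φ c x)
    {a b : V} (ha : a ∈ R) (hb : b ∈ R) (hab : r a b) : r' a b := by
  obtain ⟨x⟩ := ‹Nonempty X›
  exact hr'.rel_of_adj_of_not_rel (hr.adj_of_rel hab) fun hba =>
    lt_asymm (hrφ a ha b hb hab x) (hr'φ b hb a ha hba x)

theorem stmt15_general {V : Type*} (G : SimpleGraph V)
    (R : Set V) (φ : V → C(unitInterval, ℝ))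
    (M : Set V) (hM : IsStrongModule G M) (hMR : (M ∩ R).Nonempty)
    (u : V) (hu : u ∈ M) (a : V) (haR : a ∈ R) (haM : a ∉ M) (hadj : G.Adj a u)
    (r r' : V → V → Prop)
    (hr : IsTransOrientation G r) (hr' : IsTransOrientation G r')
    (hrφ : ∀ b ∈ R, ∀ c ∈ R, r b c → ∀ x, φ b x < φ c x)
    (hr'φ : ∀ b ∈ R, ∀ c ∈ R, r' b c → ∀ x, φ b x < φ c x) :
    r a u ↔ r' a u := by
  obtain ⟨b, hbM, hbR⟩ := hMR
  have hab : r a b ↔ r' a b :=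
    ⟨rel_of_rel_of_respects hr hr' hrφ hr'φ haR hbR,
      rel_of_rel_of_respects hr' hr hr'φ hrφ haR hbR⟩
  rw [hM.rel_iff_rel hr haM hu hbM hadj, hab, hM.rel_iff_rel hr' haM hu hbM hadj]

/-- for a represented strong module `M`, a vertex `u ∈ M` and a represented
vertex `a ∉ M` adjacent to `u`, all transitive orientations of `G` respecting the partial
representation `φ` orient the edge `au` the same way. -/
theorem stmt15 {V : Type*} [Fintype V] (G : SimpleGraph V)
    (hG : ∃ r : V → V → Prop, IsTransOrientation G r)
    (R : Set V) (φ : V → C(unitInterval, ℝ))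
    (hφ : ∀ a ∈ R, ∀ b ∈ R, a ≠ b →
      (G.Adj a b ↔ ((∀ x, φ a x < φ b x) ∨ (∀ x, φ b x < φ a x))))
    (M : Set V) (hM : IsStrongModule G M) (hMR : (M ∩ R).Nonempty)
    (u : V) (hu : u ∈ M) (a : V) (haR : a ∈ R) (haM : a ∉ M) (hadj : G.Adj a u)
    (r r' : V → V → Prop)
    (hr : IsTransOrientation G r) (hr' : IsTransOrientation G r')
    (hrφ : ∀ b ∈ R, ∀ c ∈ R, r b c → ∀ x, φ b x < φ c x)
    (hr'φ : ∀ b ∈ R, ∀ c ∈ R, r' b c → ∀ x, φ b x < φ c x) :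
    r a u ↔ r' a u :=
  stmt15_general G R φ M hM hMR u hu a haR haM hadj r r' hr hr' hrφ hr'φ
end
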